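/- Let d ≥ 1 be an integer, p > 0, s < d/p − d/2, w < 0 and k > 0. The family ( ω_m^j(p,s,w)^k )_{(j,m) ∈ (ℕ∪{0}) × ℤ^d} is summable if and only if k > max{ −d/w , 2dp/(2d − dp − 2ps) }. -/

import Mathlib

/-- The weighted Besov wavelet weight `ω_m^j(p,s,w) = 2^{j(s - d/p + d/2)} (1 + 2^{-2j}|m|²)^{w/2}`. -/
noncomputable def besovWeight (d : ℕ) (p s w : ℝ) (j : ℕ) (m : Fin d → ℤ) : ℝ :=
  (2 : ℝ) ^ ((j : ℝ) * (s - (d : ℝ) / p + (d : ℝ) / 2)) *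
    (1 + (2 : ℝ) ^ (-(2 * (j : ℝ))) * ∑ i, ((m i : ℝ)) ^ 2) ^ (w / 2)

/-!
With `t = -wk/2` and `ρ = 2^((s - d/p + d/2) k)` the summand is `ρ^j (1 + |m / 2^j|²)^(-t)`.
Cutting `ℤ^d` into cubes of side `N` shows that `∑ₘ (1 + |m / N|²)^(-t)` equals
`N^d ∑ₘ (1 + |m|²)^(-t)` up to factors `(2(d+1))^(±t)`, and the latter series converges iff
`d < 2t`: for `d < 2t` it is dominated by a product of one-dimensional series, while for
`2t ≤ d` each dyadic shell `[0, 2N)^d \ [0, N)^d` contributes at least `(1 + 4d)^(-t)`.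
Hence the double series converges iff `d < 2t` and `∑ⱼ (ρ 2^d)^j < ∞`, i.e. `ρ 2^d < 1`.
-/

open Real Finset

noncomputable def bracketWeight (d N : ℕ) (t : ℝ) (m : Fin d → ℤ) : ℝ :=
  (1 + ∑ i, ((m i : ℝ) / N) ^ 2) ^ (-t)

lemma bracketWeight_nonneg (d N : ℕ) (t : ℝ) (m : Fin d → ℤ) :
    0 ≤ bracketWeight d N t m := by
  unfold bracketWeight; positivity

lemma rpow_neg_le_mul_rpow_neg {x y C t : ℝ} (hx : 0 < x) (hy : 0 < y) (hC : 0 < C)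
    (ht : 0 ≤ t) (h : y ≤ C * x) : x ^ (-t) ≤ C ^ t * y ^ (-t) := by
  have := rpow_le_rpow_of_nonpos hy h (neg_nonpos.2 ht)
  rwa [mul_rpow hC.le hx.le, rpow_neg hC.le, inv_mul_le_iff₀ (by positivity)] at this

lemma one_add_sum_sq_le_of_abs_sub_le_one {ι : Type*} [Fintype ι] {a b : ι → ℝ}
    (h : ∀ i, |a i - b i| ≤ 1) :
    1 + ∑ i, a i ^ 2 ≤ 2 * (Fintype.card ι + 1) * (1 + ∑ i, b i ^ 2) := by
  have hsq : ∑ i, a i ^ 2 ≤ ∑ i, (2 * b i ^ 2 + 2) := by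
    refine sum_le_sum fun i _ => ?_
    have : (a i - b i) ^ 2 ≤ 1 := by
      rw [← sq_abs]; nlinarith [abs_nonneg (a i - b i), h i]
    nlinarith [sq_nonneg (a i - 2 * b i)]
  rw [sum_add_distrib, ← mul_sum, sum_const, card_univ, nsmul_eq_mul] at hsq
  have := sum_nonneg fun i (_ : i ∈ univ) => sq_nonneg (b i)
  nlinarith

lemma summable_one_add_sq_rpow_neg {u : ℝ} (hu : 1 < 2 * u) :
    Summable fun n : ℤ => (1 + (n : ℝ) ^ 2) ^ (-u) := by
  refine Summable.of_norm_bounded_eventually (summable_abs_int_rpow hu) ?_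
  filter_upwards [(Set.finite_singleton (0 : ℤ)).compl_mem_cofinite] with n hn
  have hn : (0 : ℝ) < |(n : ℝ)| := by simpa using hn
  rw [norm_of_nonneg (by positivity), neg_mul_eq_mul_neg, rpow_mul hn.le, ← sq_abs]
  exact rpow_le_rpow_of_nonpos (by positivity) (by simp) (by linarith)

lemma summable_pi_prod_of_nonneg {α : Type*} {g : α → ℝ} (hg0 : 0 ≤ g) (hg : Summable g) :
    ∀ n : ℕ, Summable fun m : Fin n → α => ∏ i, g (m i)
  | 0 => Summable.of_finite
  | n + 1 => by
    rw [← (Fin.consEquiv fun _ => α).summable_iff]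
    simpa [Function.comp_def, Fin.prod_univ_succ] using
      hg.mul_of_nonneg (summable_pi_prod_of_nonneg hg0 hg n) hg0
        fun m => prod_nonneg fun i _ => hg0 (m i)

namespace Equiv

variable {α β γ : Type*} [Fintype β] (e : α × β ≃ γ) {F : γ → ℝ}

lemma summable_iff_summable_sum (hF : 0 ≤ F) :
    Summable F ↔ Summable fun a => ∑ b, F (e (a, b)) := by
  rw [← e.summable_iff, summable_prod_of_nonneg (f := F ∘ e) fun x => hF _]
  simp [tsum_fintype, Summable.of_finite]

lemma tsum_eq_tsum_sum (hF : Summable F) : ∑' c, F c = ∑' a, ∑ b, F (e (a, b)) := by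
  rw [← e.tsum_eq, Summable.tsum_prod (f := fun c => F (e c)) (e.summable_iff.2 hF)]
  simp [tsum_fintype]

end Equiv

def blockEquiv (d N : ℕ) [NeZero N] : (Fin d → ℤ) × (Fin d → Fin N) ≃ (Fin d → ℤ) :=
  (Equiv.arrowProdEquivProdArrow _ _ _).symm.trans
    (Equiv.piCongrRight fun _ => (Int.divModEquiv N).symm)

lemma blockEquiv_apply {d N : ℕ} [NeZero N] (q : Fin d → ℤ) (r : Fin d → Fin N)
    (i : Fin d) : blockEquiv d N (q, r) i = q i * N + (r i : ℕ) := rfl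

lemma abs_blockEquiv_div_sub_le_one {d N : ℕ} [NeZero N] (q : Fin d → ℤ) (r : Fin d → Fin N)
    (i : Fin d) : |(blockEquiv d N (q, r) i : ℝ) / N - q i| ≤ 1 := by
  have hN : (0 : ℝ) < N := by exact_mod_cast Nat.pos_of_neZero N
  have hr : ((r i : ℕ) : ℝ) < N := by exact_mod_cast (r i).isLt
  rw [blockEquiv_apply, abs_le]
  push_cast
  rw [add_div, mul_div_cancel_right₀ _ hN.ne', add_sub_cancel_left]
  constructor
  · linarith [div_nonneg (Nat.cast_nonneg (α := ℝ) (r i : ℕ)) hN.le]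
  · exact (div_le_one hN).2 hr.le

section BracketWeight

variable {d : ℕ} {t : ℝ}

lemma bracketWeight_blockEquiv_le (N : ℕ) [NeZero N] (ht : 0 ≤ t) (q : Fin d → ℤ)
    (r : Fin d → Fin N) :
    bracketWeight d N t (blockEquiv d N (q, r)) ≤ (2 * (d + 1)) ^ t * bracketWeight d 1 t q := by
  unfold bracketWeight
  refine rpow_neg_le_mul_rpow_neg (by positivity) (by positivity) (by positivity) ht ?_
  simpa using one_add_sum_sq_le_of_abs_sub_le_one (a := fun i => (q i : ℝ))
    (b := fun i => (blockEquiv d N (q, r) i : ℝ) / N) fun i => by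
      rw [abs_sub_comm]; exact abs_blockEquiv_div_sub_le_one q r i

lemma bracketWeight_le_blockEquiv (N : ℕ) [NeZero N] (ht : 0 ≤ t) (q : Fin d → ℤ)
    (r : Fin d → Fin N) :
    bracketWeight d 1 t q ≤ (2 * (d + 1)) ^ t * bracketWeight d N t (blockEquiv d N (q, r)) := by
  unfold bracketWeight
  refine rpow_neg_le_mul_rpow_neg (by positivity) (by positivity) (by positivity) ht ?_
  simpa using one_add_sum_sq_le_of_abs_sub_le_one (b := fun i => (q i : ℝ))
    (a := fun i => (blockEquiv d N (q, r) i : ℝ) / N) (abs_blockEquiv_div_sub_le_one q r)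

lemma sum_bracketWeight_blockEquiv_le (N : ℕ) [NeZero N] (ht : 0 ≤ t) (q : Fin d → ℤ) :
    ∑ r, bracketWeight d N t (blockEquiv d N (q, r)) ≤
      (2 * (d + 1)) ^ t * N ^ d * bracketWeight d 1 t q := by
  have := sum_le_card_nsmul univ _ _ fun r _ => bracketWeight_blockEquiv_le N ht q r
  simpa [nsmul_eq_mul, mul_assoc, mul_left_comm] using this

lemma le_sum_bracketWeight_blockEquiv (N : ℕ) [NeZero N] (ht : 0 ≤ t) (q : Fin d → ℤ) :
    N ^ d * bracketWeight d 1 t q ≤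
      (2 * (d + 1)) ^ t * ∑ r, bracketWeight d N t (blockEquiv d N (q, r)) := by
  have := card_nsmul_le_sum univ _ _ fun r _ => bracketWeight_le_blockEquiv N ht q r
  simpa [nsmul_eq_mul, mul_sum] using this

theorem summable_bracketWeight_iff (N : ℕ) [NeZero N] (ht : 0 ≤ t) :
    Summable (bracketWeight d N t) ↔ Summable (bracketWeight d 1 t) := by
  have hN : (N : ℝ) ^ d ≠ 0 := pow_ne_zero _ (NeZero.ne _)
  rw [(blockEquiv d N).summable_iff_summable_sum (bracketWeight_nonneg d N t)]
  constructor
  · intro h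
    rw [← summable_mul_left_iff hN]
    exact .of_nonneg_of_le (fun q => by positivity [bracketWeight_nonneg d 1 t q])
      (le_sum_bracketWeight_blockEquiv N ht) (h.mul_left _)
  · intro h
    exact .of_nonneg_of_le (fun q => sum_nonneg fun r _ => bracketWeight_nonneg _ _ _ _)
      (sum_bracketWeight_blockEquiv_le N ht) (h.mul_left _)

theorem tsum_bracketWeight_le (N : ℕ) [NeZero N] (ht : 0 ≤ t) :
    ∑' m, bracketWeight d N t m ≤
      (2 * (d + 1)) ^ t * N ^ d * ∑' m, bracketWeight d 1 t m := by
  by_cases h : Summable (bracketWeight d 1 t)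
  · have hN := (summable_bracketWeight_iff N ht).2 h
    have hblock := ((blockEquiv d N).summable_iff_summable_sum (bracketWeight_nonneg d N t)).1 hN
    rw [(blockEquiv d N).tsum_eq_tsum_sum hN, ← tsum_mul_left]
    exact hblock.tsum_le_tsum (sum_bracketWeight_blockEquiv_le N ht) (h.mul_left _)
  · rw [tsum_eq_zero_of_not_summable (mt (summable_bracketWeight_iff N ht).1 h),
      tsum_eq_zero_of_not_summable h, mul_zero]

theorem le_tsum_bracketWeight (N : ℕ) [NeZero N] (ht : 0 ≤ t) :
    N ^ d * ∑' m, bracketWeight d 1 t m ≤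
      (2 * (d + 1)) ^ t * ∑' m, bracketWeight d N t m := by
  by_cases h : Summable (bracketWeight d 1 t)
  · have hN := (summable_bracketWeight_iff N ht).2 h
    have hblock := ((blockEquiv d N).summable_iff_summable_sum (bracketWeight_nonneg d N t)).1 hN
    rw [(blockEquiv d N).tsum_eq_tsum_sum hN, ← tsum_mul_left, ← tsum_mul_left]
    exact (h.mul_left _).tsum_le_tsum (le_sum_bracketWeight_blockEquiv N ht) (hblock.mul_left _)
  · rw [tsum_eq_zero_of_not_summable h, mul_zero]
    exact mul_nonneg (by positivity) (tsum_nonneg (bracketWeight_nonneg d N t))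

lemma bracketWeight_one_le_prod (hd : d ≠ 0) (ht : 0 ≤ t) (m : Fin d → ℤ) :
    bracketWeight d 1 t m ≤ ∏ i, (1 + (m i : ℝ) ^ 2) ^ (-(t / d)) := by
  set X := 1 + ∑ i, (m i : ℝ) ^ 2
  have hprod : ∏ i, (1 + (m i : ℝ) ^ 2) ≤ X ^ d := by
    calc ∏ i, (1 + (m i : ℝ) ^ 2) ≤ ∏ _i : Fin d, X :=
          prod_le_prod (fun i _ => by positivity) fun i _ => add_le_add_right
            (single_le_sum (fun j _ => sq_nonneg (m j : ℝ)) (mem_univ i)) 1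
      _ = X ^ d := by simp
  have hX : bracketWeight d 1 t m = (X ^ d) ^ (-(t / d)) := by
    rw [bracketWeight, ← rpow_natCast, ← rpow_mul (by positivity)]
    congr 1
    · simp [X]
    · field_simp
  rw [hX, finsetProd_rpow _ _ fun i _ => by positivity]
  exact rpow_le_rpow_of_nonpos (prod_pos fun i _ => by positivity) hprod
    (neg_nonpos.2 (by positivity))

lemma summable_bracketWeight_one_of_lt (hdt : (d : ℝ) < 2 * t) :
    Summable (bracketWeight d 1 t) := by
  rcases eq_or_ne d 0 with rfl | hd
  · exact Summable.of_finite
  have hd' : (0 : ℝ) < d := by positivity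
  have ht : 0 ≤ t := by linarith
  refine .of_nonneg_of_le (bracketWeight_nonneg d 1 t) (bracketWeight_one_le_prod hd ht)
    (summable_pi_prod_of_nonneg (fun n => by positivity) (summable_one_add_sq_rpow_neg ?_) d)
  rwa [mul_div_assoc', one_lt_div hd']

noncomputable def latticeCube (d N : ℕ) : Finset (Fin d → ℤ) :=
  Fintype.piFinset fun _ => Ico 0 (N : ℤ)

lemma card_latticeCube (d N : ℕ) : #(latticeCube d N) = N ^ d := by
  simp [latticeCube, Fintype.card_piFinset, Int.card_Ico]

lemma latticeCube_subset_two_mul (d N : ℕ) : latticeCube d N ⊆ latticeCube d (2 * N) :=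
  Fintype.piFinset_subset _ _ fun _ => Ico_subset_Ico_right (by push_cast; omega)

lemma pow_le_card_latticeCube_sdiff (hd : d ≠ 0) (N : ℕ) :
    N ^ d ≤ #(latticeCube d (2 * N) \ latticeCube d N) := by
  rw [card_sdiff_of_subset (latticeCube_subset_two_mul d N), card_latticeCube, card_latticeCube,
    mul_pow]
  have : 2 ≤ 2 ^ d := Nat.le_self_pow hd 2
  have : 2 * N ^ d ≤ 2 ^ d * N ^ d := Nat.mul_le_mul_right _ this
  omega

lemma rpow_neg_le_bracketWeight_of_mem (ht : 0 ≤ t) {N : ℕ} (hN : 1 ≤ N) {m : Fin d → ℤ}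
    (hm : m ∈ latticeCube d (2 * N)) :
    ((1 + 4 * d) * (N : ℝ) ^ 2) ^ (-t) ≤ bracketWeight d 1 t m := by
  have hsq : ∀ i, (m i : ℝ) ^ 2 ≤ 4 * (N : ℝ) ^ 2 := fun i => by
    have hi := mem_Ico.1 (Fintype.mem_piFinset.1 hm i)
    have h0 : (0 : ℝ) ≤ m i := by exact_mod_cast hi.1
    have h1 : (m i : ℝ) < 2 * N := by exact_mod_cast hi.2
    nlinarith
  have hsum : ∑ i, (m i : ℝ) ^ 2 ≤ d * (4 * (N : ℝ) ^ 2) := by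
    simpa using sum_le_sum fun i (_ : i ∈ univ) => hsq i
  have hN1 : (1 : ℝ) ≤ (N : ℝ) ^ 2 := one_le_pow₀ (by exact_mod_cast hN)
  rw [bracketWeight]
  refine rpow_le_rpow_of_nonpos (by positivity) ?_ (neg_nonpos.2 ht)
  simp only [Nat.cast_one, div_one]
  linarith

lemma add_sum_latticeCube_le (hd : d ≠ 0) (ht : 0 ≤ t) (htd : 2 * t ≤ d) {N : ℕ}
    (hN : 1 ≤ N) :
    (1 + 4 * d : ℝ) ^ (-t) + ∑ m ∈ latticeCube d N, bracketWeight d 1 t m ≤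
      ∑ m ∈ latticeCube d (2 * N), bracketWeight d 1 t m := by
  rw [← sum_sdiff (latticeCube_subset_two_mul d N)]
  gcongr ?_ + _
  have hN' : (1 : ℝ) ≤ N := by exact_mod_cast hN
  have hscale : (1 : ℝ) ≤ (N : ℝ) ^ d * ((N : ℝ) ^ 2) ^ (-t) := by
    rw [← rpow_natCast, ← rpow_natCast, ← rpow_mul (by positivity),
      ← rpow_add (by positivity)]
    exact one_le_rpow hN' (by push_cast; linarith)
  calc (1 + 4 * d : ℝ) ^ (-t)
      ≤ (N : ℝ) ^ d * ((1 + 4 * d) * (N : ℝ) ^ 2) ^ (-t) := by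
        rw [mul_rpow (by positivity) (by positivity), mul_left_comm]
        exact le_mul_of_one_le_right (by positivity) hscale
    _ ≤ #(latticeCube d (2 * N) \ latticeCube d N) • ((1 + 4 * d) * (N : ℝ) ^ 2) ^ (-t) := by
        rw [nsmul_eq_mul]
        gcongr
        exact_mod_cast pow_le_card_latticeCube_sdiff hd N
    _ ≤ ∑ m ∈ latticeCube d (2 * N) \ latticeCube d N, bracketWeight d 1 t m :=
        card_nsmul_le_sum _ _ _ fun m hm =>
          rpow_neg_le_bracketWeight_of_mem ht hN (sdiff_subset hm)

lemma mul_le_sum_latticeCube_two_pow (hd : d ≠ 0) (ht : 0 ≤ t) (htd : 2 * t ≤ d) (L : ℕ) :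
    L * (1 + 4 * d : ℝ) ^ (-t) ≤ ∑ m ∈ latticeCube d (2 ^ L), bracketWeight d 1 t m := by
  induction L with
  | zero => simpa using sum_nonneg fun m _ => bracketWeight_nonneg d 1 t m
  | succ L ih =>
    rw [pow_succ']
    push_cast
    linarith [add_sum_latticeCube_le hd ht htd (N := 2 ^ L) Nat.one_le_two_pow]

lemma not_summable_bracketWeight_one (hd : d ≠ 0) (ht : 0 ≤ t) (htd : 2 * t ≤ d) :
    ¬ Summable (bracketWeight d 1 t) := by
  intro h
  have hc : (0 : ℝ) < (1 + 4 * d) ^ (-t) := by positivity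
  obtain ⟨L, hL⟩ := exists_nat_gt ((∑' m, bracketWeight d 1 t m) / (1 + 4 * d) ^ (-t))
  rw [div_lt_iff₀ hc] at hL
  exact hL.not_ge ((mul_le_sum_latticeCube_two_pow hd ht htd L).trans
    (h.sum_le_tsum _ fun m _ => bracketWeight_nonneg d 1 t m))

theorem summable_bracketWeight_one_iff (ht : 0 < t) :
    Summable (bracketWeight d 1 t) ↔ (d : ℝ) < 2 * t := by
  refine ⟨fun h => ?_, summable_bracketWeight_one_of_lt⟩
  by_contra! htd
  have hd : d ≠ 0 := by rintro rfl; simp at htd; linarith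
  exact not_summable_bracketWeight_one hd ht.le htd h

theorem summable_pow_mul_bracketWeight_iff {ρ : ℝ} (hρ : 0 < ρ) (b : ℕ) [NeZero b]
    (ht : 0 < t) :
    Summable (fun x : ℕ × (Fin d → ℤ) => ρ ^ x.1 * bracketWeight d (b ^ x.1) t x.2) ↔
      (d : ℝ) < 2 * t ∧ ρ * b ^ d < 1 := by
  have hslice (j : ℕ) :
      Summable (fun m => ρ ^ j * bracketWeight d (b ^ j) t m) ↔ (d : ℝ) < 2 * t := by
    rw [summable_mul_left_iff (by positivity), summable_bracketWeight_iff _ ht.le,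
      summable_bracketWeight_one_iff ht]
  rw [summable_prod_of_nonneg fun x => mul_nonneg (by positivity) (bracketWeight_nonneg _ _ _ _)]
  simp only [hslice, forall_const]
  refine and_congr_right fun hdt => ?_
  have hsum := summable_bracketWeight_one_of_lt hdt
  set S := ∑' m, bracketWeight d 1 t m
  set C : ℝ := (2 * (d + 1)) ^ t
  have hS : 0 < S := hsum.tsum_pos (bracketWeight_nonneg d 1 t) 0 (by simp [bracketWeight])
  have hC : 0 < C := by positivity
  have hupper (j : ℕ) :
      ∑' m, ρ ^ j * bracketWeight d (b ^ j) t m ≤ C * S * (ρ * b ^ d) ^ j := by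
    rw [tsum_mul_left]
    calc ρ ^ j * ∑' m, bracketWeight d (b ^ j) t m ≤ ρ ^ j * (C * (b ^ j : ℕ) ^ d * S) := by
          gcongr; exact tsum_bracketWeight_le (b ^ j) ht.le
      _ = C * S * (ρ * b ^ d) ^ j := by push_cast; ring
  have hlower (j : ℕ) :
      S / C * (ρ * b ^ d) ^ j ≤ ∑' m, ρ ^ j * bracketWeight d (b ^ j) t m := by
    rw [tsum_mul_left, div_mul_eq_mul_div, div_le_iff₀ hC]
    calc S * (ρ * b ^ d) ^ j = ρ ^ j * ((b ^ j : ℕ) ^ d * S) := by push_cast; ring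
      _ ≤ ρ ^ j * (C * ∑' m, bracketWeight d (b ^ j) t m) :=
          mul_le_mul_of_nonneg_left (le_tsum_bracketWeight (b ^ j) ht.le) (by positivity)
      _ = _ := by ring
  rw [← norm_of_nonneg (by positivity : 0 ≤ ρ * b ^ d), ← summable_geometric_iff_norm_lt_one]
  constructor
  · intro h
    exact (summable_mul_left_iff (by positivity)).1
      (.of_nonneg_of_le (fun j => by positivity) hlower h)
  · intro h
    exact .of_nonneg_of_le (fun j => tsum_nonneg fun m => mul_nonneg (by positivity)
      (bracketWeight_nonneg _ _ _ _)) hupper (h.mul_left _)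

end BracketWeight

lemma besovWeight_rpow (d : ℕ) (p s w k : ℝ) (j : ℕ) (m : Fin d → ℤ) :
    besovWeight d p s w j m ^ k =
      ((2 : ℝ) ^ ((s - d / p + d / 2) * k)) ^ j * bracketWeight d (2 ^ j) (-(w * k / 2)) m := by
  have h4 : (2 : ℝ) ^ (-(2 * (j : ℝ))) * ∑ i, (m i : ℝ) ^ 2 =
      ∑ i, ((m i : ℝ) / (2 ^ j : ℕ)) ^ 2 := by
    rw [rpow_neg zero_le_two, show 2 * (j : ℝ) = ((2 * j : ℕ) : ℝ) by push_cast; ring,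
      rpow_natCast, mul_sum]
    push_cast
    refine sum_congr rfl fun i _ => ?_
    rw [div_pow, ← pow_mul, mul_comm j 2]; ring
  rw [besovWeight, h4, bracketWeight, mul_rpow (by positivity) (by positivity), neg_neg,
    ← rpow_mul zero_le_two, ← rpow_mul (by positivity), ← rpow_natCast,
    ← rpow_mul zero_le_two]
  congr 2 <;> ring

theorem besovWeight_pow_summable_iff_of_lt_general (d : ℕ) (p s w k : ℝ)
    (hp : 0 < p) (hs : s < (d : ℝ) / p - (d : ℝ) / 2) (hw : w < 0) (hk : 0 < k) :
    Summable (fun x : ℕ × (Fin d → ℤ) => besovWeight d p s w x.1 x.2 ^ k) ↔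
      max (-(d : ℝ) / w) (2 * (d : ℝ) * p / (2 * (d : ℝ) - (d : ℝ) * p - 2 * p * s)) < k := by
  have hD : 0 < 2 * (d : ℝ) - d * p - 2 * p * s := by
    have := lt_sub_iff_add_lt.1 hs
    rw [lt_div_iff₀ hp] at this
    nlinarith
  have hweight : -(d : ℝ) / w < k ↔ (d : ℝ) < 2 * -(w * k / 2) := by
    rw [div_lt_iff_of_neg hw]; constructor <;> intro h <;> linarith
  have hscale : 2 * (d : ℝ) * p / (2 * d - d * p - 2 * p * s) < k ↔
      (s - d / p + d / 2) * k + d < 0 := by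
    have : 2 * p * ((s - d / p + d / 2) * k + d) =
        2 * d * p - (2 * d - d * p - 2 * p * s) * k := by
      field_simp; ring
    rw [div_lt_iff₀ hD]; constructor <;> intro h <;> nlinarith
  have htwo (x : ℝ) : (2 : ℝ) ^ x < 1 ↔ x < 0 := by
    simpa using rpow_lt_rpow_left_iff (y := x) (z := 0) one_lt_two
  simp_rw [besovWeight_rpow]
  rw [summable_pow_mul_bracketWeight_iff (by positivity) 2 (by nlinarith), max_lt_iff, hweight,
    hscale, Nat.cast_ofNat, ← rpow_natCast, ← rpow_add two_pos, htwo]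

/-- For `p > 0`, `s < d/p - d/2`, `w < 0` and `k > 0`, the family `(ω_m^j(p,s,w)^k)_{(j,m)}`
is summable iff `k > max{-d/w, 2dp/(2d - dp - 2ps)}`. -/
theorem besovWeight_pow_summable_iff_of_lt (d : ℕ) (hd : 1 ≤ d) (p s w k : ℝ)
    (hp : 0 < p) (hs : s < (d : ℝ) / p - (d : ℝ) / 2) (hw : w < 0) (hk : 0 < k) :
    Summable (fun x : ℕ × (Fin d → ℤ) => besovWeight d p s w x.1 x.2 ^ k) ↔
      max (-(d : ℝ) / w) (2 * (d : ℝ) * p / (2 * (d : ℝ) - (d : ℝ) * p - 2 * p * s)) < k :=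
  besovWeight_pow_summable_iff_of_lt_general d p s w k hp hs hw hk
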